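/- For any τ_1,…,τ_k ∈ [0,1], any p_0, p_1,…,p_k ∈ (0,1), any θ ∈ (ℝ^d)^n, any cluster j, and any client i ∈ I_j, the stochastic gradient oracle is unbiased: p_0 · [ (γ_i α_j/p_0)(θ_i − θ̄) + (γ_i τ_j(1−α_j)/p_0)(θ_i − θ̄_j) ] + (1−p_0)p_j · [ (γ_i(1−τ_j)(1−α_j)/((1−p_0)p_j))(θ_i − θ̄_j) ] + (1−p_0)(1−p_j) · [ (1/((1−p_0)(1−p_j)))∇f_i(θ_i) ] = ∇f_i(θ_i) + α_j γ_i (θ_i − θ̄) + (1−α_j) γ_i (θ_i − θ̄_j), and this quantity equals the partial gradient ∇_{θ_i} F(θ) of the objective F(θ) = Σ_{i=1}^n f_i(θ_i) + Σ_{j=1}^k (1−α_j)ψ_j(θ) + φ(θ). -/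

import Mathlib

/-!
Both regularizers are halves of weighted sums of squared deviations from a weighted mean `m`.
By the parallel-axis identity `∑ w ‖u - m‖² = ∑ w ‖u‖² - (∑ w) ‖m‖²`, moving a single point
`u i` changes such a sum by an explicit quadratic in `u i`, whose gradient is `w i • (u i - m)`:
the contribution through the moving mean cancels. Only the regularizer of the cluster of `i`
depends on `θ i`, which gives the partial gradient of `F`. Unbiasedness of the oracle is the
cancellation of each branch's probability against its importance weight.
-/

open scoped BigOperators

noncomputable section

/-- `E d` is the Euclidean space ℝ^d. -/
abbrev E (d : ℕ) := EuclideanSpace ℝ (Fin d)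

/-- The cluster `I_j` of clients assigned to cluster `j` by the assignment map `c`. -/
def clSet {n k : ℕ} (c : Fin n → Fin k) (j : Fin k) : Finset (Fin n) :=
  Finset.univ.filter fun i => c i = j

/-- The weighted cluster average θ̄_j = (Σ_{i∈I_j} γ_i θ_i)/(Σ_{i∈I_j} γ_i). -/
def clAvg {n k d : ℕ} (c : Fin n → Fin k) (γ : Fin n → ℝ) (j : Fin k)
    (θ : Fin n → E d) : E d :=
  (∑ i ∈ clSet c j, γ i)⁻¹ • ∑ i ∈ clSet c j, γ i • θ i

/-- The global average θ̄ = (Σ_j Σ_{i∈I_j} α_j γ_i θ_i)/(Σ_j Σ_{i∈I_j} α_j γ_i). -/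
def glAvg {n k d : ℕ} (c : Fin n → Fin k) (γ : Fin n → ℝ) (α : Fin k → ℝ)
    (θ : Fin n → E d) : E d :=
  (∑ j, ∑ i ∈ clSet c j, α j * γ i)⁻¹ • ∑ j, ∑ i ∈ clSet c j, (α j * γ i) • θ i

/-- The within-cluster regularizer ψ_j(θ) = (1/2) Σ_{i∈I_j} γ_i ‖θ_i − θ̄_j‖². -/
def psi {n k d : ℕ} (c : Fin n → Fin k) (γ : Fin n → ℝ) (j : Fin k)
    (θ : Fin n → E d) : ℝ :=
  1/2 * ∑ i ∈ clSet c j, γ i * ‖θ i - clAvg c γ j θ‖ ^ 2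

/-- The global regularizer φ(θ) = (1/2) Σ_j α_j Σ_{i∈I_j} γ_i ‖θ_i − θ̄‖². -/
def phi {n k d : ℕ} (c : Fin n → Fin k) (γ : Fin n → ℝ) (α : Fin k → ℝ)
    (θ : Fin n → E d) : ℝ :=
  1/2 * ∑ j, α j * ∑ i ∈ clSet c j, γ i * ‖θ i - glAvg c γ α θ‖ ^ 2

/-- The full objective F(θ) = Σ_i f_i(θ_i) + Σ_j (1−α_j) ψ_j(θ) + φ(θ). -/
def objF {n k d : ℕ} (c : Fin n → Fin k) (γ : Fin n → ℝ) (α : Fin k → ℝ)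
    (f : Fin n → E d → ℝ) (θ : Fin n → E d) : ℝ :=
  (∑ i, f i (θ i)) + (∑ j, (1 - α j) * psi c γ j θ) + phi c γ α θ


open Finset Function
open scoped RealInnerProductSpace

namespace HasGradientAt

variable {F : Type*} [NormedAddCommGroup F] [InnerProductSpace ℝ F] [CompleteSpace F]
  {f g : F → ℝ} {f' g' x : F}

theorem add (hf : HasGradientAt f f' x) (hg : HasGradientAt g g' x) :
    HasGradientAt (fun y => f y + g y) (f' + g') x := by
  rw [hasGradientAt_iff_hasFDerivAt, map_add]
  exact HasFDerivAt.add hf hg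

theorem add_const (hf : HasGradientAt f f' x) (C : ℝ) :
    HasGradientAt (fun y => f y + C) f' x :=
  (hasFDerivAt_add_const_iff C).2 hf

theorem const_mul (r : ℝ) (hf : HasGradientAt f f' x) :
    HasGradientAt (fun y => r * f y) (r • f') x := by
  rw [hasGradientAt_iff_hasFDerivAt, map_smul]
  exact HasFDerivAt.const_mul hf r

theorem finset_sum_of_ne_const {κ : Type*} {S : Finset κ} {h : κ → F → ℝ} {j₀ : κ}
    (hj₀ : j₀ ∈ S) (hconst : ∀ j ∈ S, j ≠ j₀ → ∀ y, h j y = h j x)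
    (hg : HasGradientAt (h j₀) g' x) :
    HasGradientAt (fun y => ∑ j ∈ S, h j y) g' x := by
  classical
  have hsplit : (fun y => ∑ j ∈ S, h j y) = fun y => h j₀ y + ∑ j ∈ S.erase j₀, h j x := by
    funext y
    rw [← add_sum_erase S _ hj₀]
    exact congrArg _ <| sum_congr rfl fun j hj =>
      hconst j (mem_of_mem_erase hj) (ne_of_mem_erase hj) y
  rw [hsplit]
  exact hg.add_const _

end HasGradientAt

section Dispersion

variable {ι F : Type*} [NormedAddCommGroup F] [InnerProductSpace ℝ F]

theorem hasGradientAt_norm_sq [CompleteSpace F] (x : F) :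
    HasGradientAt (fun y => ‖y‖ ^ 2) ((2 : ℝ) • x) x := by
  rw [hasGradientAt_iff_hasFDerivAt]
  refine (hasStrictFDerivAt_norm_sq x).hasFDerivAt.congr_fderiv ?_
  ext y
  simp

theorem hasGradientAt_norm_sq_add_smul_sub [CompleteSpace F] (b x : F) (r : ℝ) :
    HasGradientAt (fun y => ‖b + r • (y - x)‖ ^ 2) ((2 * r) • b) x := by
  rw [hasGradientAt_iff_hasFDerivAt]
  have haff : HasFDerivAt (fun y : F => b + r • (y - x)) (r • ContinuousLinearMap.id ℝ F) x := by
    simpa using (((hasFDerivAt_id x).sub_const x).const_smul r).const_add b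
  refine haff.norm_sq.congr_fderiv ?_
  ext y
  simp [mul_assoc]

def weightedDispersion (S : Finset ι) (w : ι → ℝ) (u : ι → F) : ℝ :=
  1 / 2 * ∑ l ∈ S, w l * ‖u l - S.centerMass w u‖ ^ 2

theorem inner_sum_smul_centerMass (S : Finset ι) (w : ι → ℝ) (u : ι → F) :
    ⟪(∑ l ∈ S, w l • u l), S.centerMass w u⟫ = (∑ l ∈ S, w l) * ‖S.centerMass w u‖ ^ 2 := by
  have hinv : (∑ l ∈ S, w l) * (∑ l ∈ S, w l)⁻¹ ^ 2 = (∑ l ∈ S, w l)⁻¹ := by grind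
  simp only [centerMass, real_inner_smul_right, norm_smul, mul_pow, Real.norm_eq_abs, sq_abs,
    real_inner_self_eq_norm_sq, ← mul_assoc, hinv]

theorem weightedDispersion_eq (S : Finset ι) (w : ι → ℝ) (u : ι → F) :
    weightedDispersion S w u
      = 1 / 2 * (∑ l ∈ S, w l * ‖u l‖ ^ 2 - (∑ l ∈ S, w l) * ‖S.centerMass w u‖ ^ 2) := by
  rw [weightedDispersion]
  set m := S.centerMass w u
  have hcross : ∑ l ∈ S, w l * ⟪u l, m⟫ = (∑ l ∈ S, w l) * ‖m‖ ^ 2 := by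
    simp only [← real_inner_smul_left, ← sum_inner, inner_sum_smul_centerMass, m]
  have hexpand (l : ι) : w l * ‖u l - m‖ ^ 2
      = w l * ‖u l‖ ^ 2 - 2 * (w l * ⟪u l, m⟫) + w l * ‖m‖ ^ 2 := by
    rw [norm_sub_sq_real]; ring
  rw [sum_congr rfl fun l _ => hexpand l, sum_add_distrib, sum_sub_distrib, ← mul_sum, ← sum_mul,
    hcross]
  ring

theorem Finset.sum_apply_update_of_mem {α M : Type*} [DecidableEq ι] [AddCommGroup M]
    {S : Finset ι} {i : ι} (hi : i ∈ S) (g : ι → α → M) (u : ι → α) (x : α) :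
    ∑ l ∈ S, g l (update u i x l) = ∑ l ∈ S, g l (u l) + (g i x - g i (u i)) := by
  rw [← add_sum_erase S _ hi, ← add_sum_erase S (fun l => g l (u l)) hi, update_self,
    sum_congr rfl fun l hl => by rw [update_of_ne (ne_of_mem_erase hl)]]
  abel

theorem Finset.centerMass_update_of_mem [DecidableEq ι] {S : Finset ι} {i : ι} (hi : i ∈ S)
    (w : ι → ℝ) (u : ι → F) (x : F) :
    S.centerMass w (update u i x)
      = S.centerMass w u + ((∑ l ∈ S, w l)⁻¹ * w i) • (x - u i) := by
  simp only [centerMass]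
  rw [sum_apply_update_of_mem hi (fun l v => w l • v)]
  module

theorem Finset.sum_mul_inv_smul_centerMass (S : Finset ι) (w : ι → ℝ) (u : ι → F) :
    ((∑ l ∈ S, w l) * (∑ l ∈ S, w l)⁻¹) • S.centerMass w u = S.centerMass w u := by
  rw [centerMass, smul_smul]
  congr 1
  grind

theorem weightedDispersion_update_of_not_mem [DecidableEq ι] {S : Finset ι} {i : ι} (hi : i ∉ S)
    (w : ι → ℝ) (u : ι → F) (x : F) :
    weightedDispersion S w (update u i x) = weightedDispersion S w u := by
  have hS : ∀ l ∈ S, update u i x l = u l := fun l hl =>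
    update_of_ne (ne_of_mem_of_not_mem hl hi) _ _
  have hmean : S.centerMass w (update u i x) = S.centerMass w u :=
    centerMass_congr_fun fun l hl _ => hS l hl
  simp only [weightedDispersion, hmean]
  exact congrArg _ (sum_congr rfl fun l hl => by rw [hS l hl])

theorem hasGradientAt_weightedDispersion_update [CompleteSpace F] [DecidableEq ι] {S : Finset ι}
    {i : ι} (hi : i ∈ S) (w : ι → ℝ) (u : ι → F) :
    HasGradientAt (fun x => weightedDispersion S w (update u i x))
      (w i • (u i - S.centerMass w u)) (u i) := by
  set s := ∑ l ∈ S, w l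
  set m := S.centerMass w u
  have hfun : (fun x => weightedDispersion S w (update u i x)) = fun x =>
      (1 / 2 * w i) * ‖x‖ ^ 2 + (-(s / 2)) * ‖m + (s⁻¹ * w i) • (x - u i)‖ ^ 2
        + 1 / 2 * (∑ l ∈ S, w l * ‖u l‖ ^ 2 - w i * ‖u i‖ ^ 2) := by
    funext x
    rw [weightedDispersion_eq, centerMass_update_of_mem hi,
      sum_apply_update_of_mem hi (fun l v => w l * ‖v‖ ^ 2)]
    ring
  rw [hfun]
  convert (((hasGradientAt_norm_sq (u i)).const_mul (1 / 2 * w i)).add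
    ((hasGradientAt_norm_sq_add_smul_sub m (u i) (s⁻¹ * w i)).const_mul (-(s / 2)))).add_const _
    using 1
  have hm : (s * s⁻¹) • m = m := sum_mul_inv_smul_centerMass S w u
  rw [smul_smul, smul_smul, show -(s / 2) * (2 * (s⁻¹ * w i)) = -w i * (s * s⁻¹) by ring,
    mul_smul (-w i), hm]
  module

end Dispersion

theorem smul_div_smul_cancel {K V : Type*} [Field K] [AddCommGroup V] [Module K V] {p : K}
    (hp : p ≠ 0) (a : K) (v : V) : p • ((a / p) • v) = a • v := by
  rw [smul_smul, mul_div_cancel₀ _ hp]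

section Clusters

variable {n k d : ℕ} (c : Fin n → Fin k) (γ : Fin n → ℝ) (α : Fin k → ℝ)

theorem mem_clSet {j : Fin k} {i : Fin n} : i ∈ clSet c j ↔ c i = j := by
  simp [clSet]

theorem sum_sum_clSet {M : Type*} [AddCommMonoid M] (g : Fin k → Fin n → M) :
    ∑ j, ∑ i ∈ clSet c j, g j i = ∑ i, g (c i) i := by
  rw [← sum_fiberwise univ c fun i => g (c i) i]
  exact sum_congr rfl fun j _ => sum_congr rfl fun i hi => by rw [(mem_clSet c).1 hi]

theorem glAvg_eq_centerMass (θ : Fin n → E d) :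
    glAvg c γ α θ = univ.centerMass (fun i => α (c i) * γ i) θ := by
  rw [glAvg, centerMass, sum_sum_clSet c fun j i => α j * γ i,
    sum_sum_clSet c fun j i => (α j * γ i) • θ i]

theorem psi_eq_weightedDispersion (j : Fin k) (θ : Fin n → E d) :
    psi c γ j θ = weightedDispersion (clSet c j) γ θ :=
  rfl

theorem phi_eq_weightedDispersion (θ : Fin n → E d) :
    phi c γ α θ = weightedDispersion univ (fun i => α (c i) * γ i) θ := by
  rw [phi, weightedDispersion, ← glAvg_eq_centerMass]
  congr 1
  simp_rw [mul_sum]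
  rw [sum_sum_clSet c fun j i => α j * (γ i * ‖θ i - glAvg c γ α θ‖ ^ 2)]
  simp_rw [mul_assoc]

theorem hasGradientAt_objF_update (f : Fin n → E d → ℝ) (θ : Fin n → E d) (i : Fin n)
    (hf : DifferentiableAt ℝ (f i) (θ i)) :
    HasGradientAt (fun x => objF c γ α f (update θ i x))
      (gradient (f i) (θ i) + (α (c i) * γ i) • (θ i - glAvg c γ α θ)
        + ((1 - α (c i)) * γ i) • (θ i - clAvg c γ (c i) θ)) (θ i) := by
  have hloss : HasGradientAt (fun x => ∑ l, f l (update θ i x l)) (gradient (f i) (θ i)) (θ i) :=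
    .finset_sum_of_ne_const (mem_univ i) (fun l _ hl y => by simp only [update_of_ne hl])
      (by simpa only [update_self] using hf.hasGradientAt)
  have hpsi : HasGradientAt (fun x => ∑ j, (1 - α j) * psi c γ j (update θ i x))
      (((1 - α (c i)) * γ i) • (θ i - clAvg c γ (c i) θ)) (θ i) := by
    refine .finset_sum_of_ne_const (mem_univ (c i)) (fun j _ hj y => ?_) ?_
    · simp only [psi_eq_weightedDispersion,
        weightedDispersion_update_of_not_mem (mt (mem_clSet c).1 (Ne.symm hj))]
    · rw [mul_smul]
      exact (hasGradientAt_weightedDispersion_update ((mem_clSet c).2 rfl) γ θ).const_mul _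
  have hphi : HasGradientAt (fun x => phi c γ α (update θ i x))
      ((α (c i) * γ i) • (θ i - glAvg c γ α θ)) (θ i) := by
    simp only [phi_eq_weightedDispersion, glAvg_eq_centerMass]
    exact hasGradientAt_weightedDispersion_update (mem_univ i) _ θ
  rw [add_right_comm]
  exact (hloss.add hpsi).add hphi

end Clusters

theorem oracle_unbiased_general {n k d : ℕ}
    (c : Fin n → Fin k)
    (γ : Fin n → ℝ)
    (α : Fin k → ℝ)
    (f : Fin n → E d → ℝ) (hdiff : ∀ i, Differentiable ℝ (f i))
    (τ : Fin k → ℝ)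
    (p0 : ℝ) (hp0 : p0 ∈ Set.Ioo (0 : ℝ) 1)
    (p : Fin k → ℝ) (hp : ∀ j, p j ∈ Set.Ioo (0 : ℝ) 1) :
    ∀ (θ : Fin n → E d) (j : Fin k) (i : Fin n), c i = j →
      (p0 • ((γ i * α j / p0) • (θ i - glAvg c γ α θ)
            + (γ i * τ j * (1 - α j) / p0) • (θ i - clAvg c γ j θ))
        + ((1 - p0) * p j) •
            ((γ i * (1 - τ j) * (1 - α j) / ((1 - p0) * p j)) • (θ i - clAvg c γ j θ))
        + ((1 - p0) * (1 - p j)) •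
            ((1 / ((1 - p0) * (1 - p j))) • gradient (f i) (θ i))
        = gradient (f i) (θ i) + (α j * γ i) • (θ i - glAvg c γ α θ)
          + ((1 - α j) * γ i) • (θ i - clAvg c γ j θ)) ∧
      (gradient (f i) (θ i) + (α j * γ i) • (θ i - glAvg c γ α θ)
          + ((1 - α j) * γ i) • (θ i - clAvg c γ j θ)
        = gradient (fun x => objF c γ α f (Function.update θ i x)) (θ i)) := by
  intro θ j i hij
  subst hij
  have hp0_ne : p0 ≠ 0 := hp0.1.ne'
  have h1p0_ne : 1 - p0 ≠ 0 := sub_ne_zero.2 hp0.2.ne'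
  have hlocal_ne : (1 - p0) * p (c i) ≠ 0 := mul_ne_zero h1p0_ne (hp (c i)).1.ne'
  have hgrad_ne : (1 - p0) * (1 - p (c i)) ≠ 0 :=
    mul_ne_zero h1p0_ne (sub_ne_zero.2 (hp (c i)).2.ne')
  refine ⟨?_, ((hasGradientAt_objF_update c γ α f θ i (hdiff i _)).gradient).symm⟩
  rw [smul_add, smul_div_smul_cancel hp0_ne, smul_div_smul_cancel hp0_ne,
    smul_div_smul_cancel hlocal_ne, smul_div_smul_cancel hgrad_ne]
  module

/-- the Async-L2GD stochastic gradient oracle is unbiased: the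
probability-weighted combination of its three branches equals
∇f_i(θ_i) + α_j γ_i (θ_i − θ̄) + (1−α_j) γ_i (θ_i − θ̄_j), which is the partial
gradient of F with respect to θ_i. -/
theorem oracle_unbiased {n k d : ℕ}
    (c : Fin n → Fin k) (hc : ∀ j, (clSet c j).Nonempty)
    (γ : Fin n → ℝ) (hγ : ∀ i, 0 < γ i)
    (α : Fin k → ℝ) (hα : ∀ j, α j ∈ Set.Ioc (0 : ℝ) 1)
    (f : Fin n → E d → ℝ) (hdiff : ∀ i, Differentiable ℝ (f i))
    (τ : Fin k → ℝ) (hτ : ∀ j, τ j ∈ Set.Icc (0 : ℝ) 1)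
    (p0 : ℝ) (hp0 : p0 ∈ Set.Ioo (0 : ℝ) 1)
    (p : Fin k → ℝ) (hp : ∀ j, p j ∈ Set.Ioo (0 : ℝ) 1) :
    ∀ (θ : Fin n → E d) (j : Fin k) (i : Fin n), c i = j →
      (p0 • ((γ i * α j / p0) • (θ i - glAvg c γ α θ)
            + (γ i * τ j * (1 - α j) / p0) • (θ i - clAvg c γ j θ))
        + ((1 - p0) * p j) •
            ((γ i * (1 - τ j) * (1 - α j) / ((1 - p0) * p j)) • (θ i - clAvg c γ j θ))
        + ((1 - p0) * (1 - p j)) •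
            ((1 / ((1 - p0) * (1 - p j))) • gradient (f i) (θ i))
        = gradient (f i) (θ i) + (α j * γ i) • (θ i - glAvg c γ α θ)
          + ((1 - α j) * γ i) • (θ i - clAvg c γ j θ)) ∧
      (gradient (f i) (θ i) + (α j * γ i) • (θ i - glAvg c γ α θ)
          + ((1 - α j) * γ i) • (θ i - clAvg c γ j θ)
        = gradient (fun x => objF c γ α f (Function.update θ i x)) (θ i)) :=
  oracle_unbiased_general c γ α f hdiff τ p0 hp0 p hp
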